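/- arXiv:2406.18789 — 5 statements merged into one kernel-verified Lean document; each statement's English description precedes it below -/
import Mathlib

section
/- Let p > 0 and let (β_t) and (σ_t) be sequences of nonnegative reals such that β_{t+1} ≤ (1 - σ_t β_t^p) β_t for all t ∈ ℕ. Then for all t ∈ ℕ, β_t ≤ (β_0^{-p} + p ∑_{i=0}^{t-1} σ_i)^{-1/p}. -/
/-!
Along the recursion the quantity `β t ^ (-p)` grows by at least `p * σ t` per step: writing
`u = σ t * β t ^ p < 1`, we have `β (t+1) ^ (-p) ≥ (1 - u) ^ (-p) * β t ^ (-p)`, and the Bernoulli-type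
bound `(1 - u) ^ (-p) ≥ 1 + p * u` turns this into `β t ^ (-p) + p * σ t`. Summing and inverting
gives the claim; once some `β t` vanishes, all later ones vanish and the bound is trivial.
-/

open Real Finset

lemma one_add_mul_le_one_sub_rpow_neg {p u : ℝ} (hp : 0 ≤ p) (hu : u < 1) :
    1 + p * u ≤ (1 - u) ^ (-p) := by
  have h1u : 0 < 1 - u := by linarith
  have hlog : log (1 - u) ≤ -u := by linarith [log_le_sub_one_of_pos h1u]
  rw [rpow_def_of_pos h1u]
  nlinarith [add_one_le_exp (log (1 - u) * -p)]

lemma rpow_neg_add_mul_le_of_le_one_sub_mul {p s b b' : ℝ} (hp : 0 ≤ p) (hb : 0 < b)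
    (hb' : 0 < b') (h : b' ≤ (1 - s * b ^ p) * b) : b ^ (-p) + p * s ≤ b' ^ (-p) := by
  have hu : 0 < 1 - s * b ^ p := pos_of_mul_pos_left (hb'.trans_le h) hb.le
  have hcancel : b ^ p * b ^ (-p) = 1 := by rw [← rpow_add hb]; simp
  calc b ^ (-p) + p * s = (1 + p * (s * b ^ p)) * b ^ (-p) := by
        linear_combination (-(p * s)) * hcancel
    _ ≤ (1 - s * b ^ p) ^ (-p) * b ^ (-p) := by
        gcongr
        exact one_add_mul_le_one_sub_rpow_neg hp (by linarith)
    _ = ((1 - s * b ^ p) * b) ^ (-p) := (mul_rpow hu.le hb.le).symm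
    _ ≤ b' ^ (-p) := rpow_le_rpow_of_nonpos hb' h (by linarith)

/-- Lemma (Polyak / Borwein): if `p > 0`, `β, σ` are nonnegative sequences with
`β (t+1) ≤ (1 - σ t * (β t)^p) * β t`, and `β 0 > 0`, then
`β t ≤ (β 0 ^ (-p) + p * ∑_{i<t} σ i) ^ (-1/p)`. -/
theorem stmt0 (p : ℝ) (hp : 0 < p) (β σ : ℕ → ℝ)
    (hβ : ∀ t, 0 ≤ β t) (hσ : ∀ t, 0 ≤ σ t) (hβ0 : 0 < β 0)
    (hrec : ∀ t, β (t + 1) ≤ (1 - σ t * β t ^ p) * β t) :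
    ∀ t, β t ≤ (β 0 ^ (-p) + p * ∑ i ∈ Finset.range t, σ i) ^ (-1 / p) := by
  set A : ℕ → ℝ := fun t => β 0 ^ (-p) + p * ∑ i ∈ range t, σ i
  have hA : ∀ t, 0 < A t := fun t =>
    add_pos_of_pos_of_nonneg (rpow_pos_of_pos hβ0 _)
      (mul_nonneg hp.le (sum_nonneg fun i _ => hσ i))
  have pos_of_pos_succ : ∀ t, 0 < β (t + 1) → 0 < β t := fun t hpos =>
    (hβ t).lt_of_ne fun h0 => by linarith [h0 ▸ hrec t]
  have key : ∀ t, 0 < β t → A t ≤ β t ^ (-p) := by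
    intro t
    induction t with
    | zero => intro; simp [A]
    | succ t ih =>
      intro hpos
      have hprev := pos_of_pos_succ t hpos
      calc A (t + 1) = A t + p * σ t := by simp only [A, sum_range_succ]; ring
        _ ≤ β t ^ (-p) + p * σ t := by linarith [ih hprev]
        _ ≤ β (t + 1) ^ (-p) :=
          rpow_neg_add_mul_le_of_le_one_sub_mul hp.le hprev hpos (hrec t)
  intro t
  rcases (hβ t).eq_or_lt with h0 | hpos
  · rw [← h0]
    exact (rpow_pos_of_pos (hA t) _).le
  · rw [show -1 / p = (-p)⁻¹ by rw [neg_div, one_div, inv_neg]]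
    exact (le_rpow_inv_iff_of_neg hpos (hA t) (neg_lt_zero.mpr hp)).mpr (key t hpos)
end

section
/- If f : C → ℝ satisfies the uniform convexity property f(λx + (1-λ)y) ≤ λf(x) + (1-λ)f(y) - μλ(1-λ)‖x-y‖^{1/θ} for all x, y ∈ C and λ ∈ [0,1], where μ > 0 and θ ∈ (0, 1/2], then (C, f) satisfies the (μ, θ)-Hölderian error bound: for all x ∈ C, ((f(x) - f*)/μ)^θ ≥ min_{x* ∈ X*} ‖x* - x‖, where f* = min_{x ∈ C} f(x) and X* is the set of minimizers. -/
/-- Uniform convexity of degree `1/θ` implies the `(μ, θ)`-Hölderian error bound. -/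
theorem stmt3 {E : Type*} [NormedAddCommGroup E] [NormedSpace ℝ E]
    (C : Set E) (hCconv : Convex ℝ C) (hCcomp : IsCompact C) (hCne : C.Nonempty)
    (f : E → ℝ) (hfcont : ContinuousOn f C)
    (μ θ : ℝ) (hμ : 0 < μ) (hθ : θ ∈ Set.Ioc (0 : ℝ) (1 / 2))
    (huc : ∀ x ∈ C, ∀ y ∈ C, ∀ l ∈ Set.Icc (0 : ℝ) 1,
      f (l • x + (1 - l) • y) ≤
        l * f x + (1 - l) * f y - μ * l * (1 - l) * ‖x - y‖ ^ (1 / θ)) :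
    ∀ x ∈ C,
      ((f x - sInf (f '' C)) / μ) ^ θ ≥
        sInf {d : ℝ | ∃ z ∈ {y ∈ C | f y = sInf (f '' C)}, d = ‖z - x‖} := by
  obtain ⟨z, hzC, hz⟩ := hCcomp.exists_isMinOn hCne hfcont
  have hbdd : BddBelow (f '' C) := (hCcomp.image_of_continuousOn hfcont).bddBelow
  have hfz : f z = sInf (f '' C) := by
    refine le_antisymm (le_csInf (hCne.image f) ?_) (csInf_le hbdd ⟨z, hzC, rfl⟩)
    rintro _ ⟨y, hy, rfl⟩
    exact hz hy
  intro x hx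
  have hθ0 : 0 < θ := hθ.1
  set a : ℝ := ‖x - z‖ ^ (1 / θ) with ha
  have ha0 : 0 ≤ a := Real.rpow_nonneg (norm_nonneg _) _
  -- key inequality for l ∈ Ioo 0 1
  have key : ∀ l ∈ Set.Ioo (0 : ℝ) 1, μ * (1 - l) * a ≤ f x - f z := by
    intro l hl
    have hlIcc : l ∈ Set.Icc (0 : ℝ) 1 := ⟨hl.1.le, hl.2.le⟩
    have h1 := huc x hx z hzC l hlIcc
    have hmem : l • x + (1 - l) • z ∈ C :=
      hCconv hx hzC hl.1.le (by linarith [hl.2]) (by ring)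
    have h2 : f z ≤ f (l • x + (1 - l) • z) := hz hmem
    have h3 : μ * l * (1 - l) * a ≤ l * (f x - f z) := by nlinarith
    have hl0 : 0 < l := hl.1
    nlinarith
  -- take l → 0⁺
  have hlim : μ * a ≤ f x - f z := by
    have ht : Filter.Tendsto (fun l : ℝ => μ * (1 - l) * a) (nhdsWithin 0 (Set.Ioi 0))
        (nhds (μ * (1 - 0) * a)) := by
      apply Filter.Tendsto.mono_left _ nhdsWithin_le_nhds
      exact (Continuous.mul (continuous_const.mul (continuous_const.sub continuous_id))
        continuous_const).tendsto 0
    have hev : ∀ᶠ l in nhdsWithin (0 : ℝ) (Set.Ioi 0),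
        μ * (1 - l) * a ≤ f x - f z := by
      filter_upwards [Ioo_mem_nhdsGT_of_mem (by norm_num : (0:ℝ) ∈ Set.Ico (0:ℝ) 1)]
        with l hl using key l hl
    have := le_of_tendsto ht hev
    simpa using this
  -- convert to norms
  have hne : θ ≠ 0 := ne_of_gt hθ0
  have hxz : ‖x - z‖ ≤ ((f x - f z) / μ) ^ θ := by
    have h4 : a ≤ (f x - f z) / μ := (le_div_iff₀' hμ).mpr hlim
    have h5 : a ^ θ ≤ ((f x - f z) / μ) ^ θ :=
      Real.rpow_le_rpow ha0 h4 hθ0.le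
    have h6 : a ^ θ = ‖x - z‖ := by
      rw [ha, ← Real.rpow_mul (norm_nonneg _)]
      simp [one_div, inv_mul_cancel₀ hne]
    rwa [h6] at h5
  have hSle : sInf {d : ℝ | ∃ w ∈ {y ∈ C | f y = sInf (f '' C)}, d = ‖w - x‖} ≤ ‖z - x‖ := by
    apply csInf_le
    · refine ⟨0, ?_⟩
      rintro d ⟨w, hw, rfl⟩
      positivity
    · exact ⟨z, ⟨hzC, hfz⟩, rfl⟩
  calc sInf {d : ℝ | ∃ w ∈ {y ∈ C | f y = sInf (f '' C)}, d = ‖w - x‖} ≤ ‖z - x‖ := hSle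
    _ = ‖x - z‖ := norm_sub_rev _ _
    _ ≤ ((f x - f z) / μ) ^ θ := hxz
    _ = ((f x - sInf (f '' C)) / μ) ^ θ := by rw [hfz]
end

section
/- Let C ⊆ ℝⁿ be a polytope and f : C → ℝ convex and differentiable on an open set containing C. For every x ∈ C \ X*, max_{v ∈ C} ⟨∇f(x), x - v⟩ ≥ (f(x) - f*)/r(X*, x), where r is the radial distance r(y, x) = min{ρ ≥ 0 : y - x = ρ(v - x) for some v ∈ C} and r(X*, x) = min_{x* ∈ X*} r(x*, x). -/
/-!
If `z ∈ X*` and `z - x = ρ (v - x)` with `v ∈ C`, the gradient inequality gives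
`f x - f* ≤ ⟨∇f(x), x - z⟩ = ρ ⟨∇f(x), x - v⟩ ≤ ρ M`, where `M` is the maximum of `⟨∇f(x), x - v⟩`
over `C`. Taking the infimum over `ρ` and then over `z ∈ X*` gives `f x - f* ≤ r(X*, x) M`.
-/

/-- The radial distance on a polytope `C`:
`r(y, x) = min {ρ ≥ 0 : y - x = ρ (v - x) for some v ∈ C}`. -/
noncomputable def radialDist {E : Type*} [NormedAddCommGroup E] [NormedSpace ℝ E]
    (C : Set E) (y x : E) : ℝ :=
  sInf {ρ : ℝ | 0 ≤ ρ ∧ ∃ v ∈ C, y - x = ρ • (v - x)}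

open AffineMap

section

variable {E : Type*} [NormedAddCommGroup E] [NormedSpace ℝ E]

theorem ConvexOn.apply_sub_le_of_hasFDerivAt {s : Set E} {f : E → ℝ} {f' : E →L[ℝ] ℝ} {x z : E}
    (hf : ConvexOn ℝ s f) (hx : x ∈ s) (hz : z ∈ s) (hd : HasFDerivAt f f' x) :
    f' (z - x) ≤ f z - f x := by
  let L : ℝ →ᵃ[ℝ] E := lineMap x z
  have hline : ConvexOn ℝ (L ⁻¹' s) (f ∘ L) := hf.comp_affineMap L
  have hderiv : HasDerivAt (f ∘ L) (f' (z - x)) 0 := by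
    rw [← lineMap_apply_zero x z (k := ℝ)] at hd
    exact hd.comp_hasDerivAt 0 hasDerivAt_lineMap
  simpa [L, slope_def_field] using
    hline.le_slope_of_hasDerivAt (by simpa [L]) (by simpa [L]) zero_lt_one hderiv

theorem ConvexOn.sub_le_radialDist_mul {C : Set E} {f : E → ℝ} {f' : E →L[ℝ] ℝ} {x z : E} {M : ℝ}
    (hf : ConvexOn ℝ C f) (hx : x ∈ C) (hz : z ∈ C) (hd : HasFDerivAt f f' x) (hM : 0 < M)
    (hbound : ∀ v ∈ C, f' (x - v) ≤ M) :
    f x - f z ≤ radialDist C z x * M := by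
  rw [← div_le_iff₀ hM]
  refine le_csInf ⟨1, zero_le_one, z, hz, by simp⟩ ?_
  rintro ρ ⟨hρ, v, hv, hzv⟩
  rw [div_le_iff₀ hM]
  calc f x - f z ≤ -f' (z - x) := by linarith [hf.apply_sub_le_of_hasFDerivAt hx hz hd]
    _ = ρ * f' (x - v) := by rw [hzv, ← neg_sub v x, map_smul, map_neg, smul_eq_mul, mul_neg]
    _ ≤ ρ * M := mul_le_mul_of_nonneg_left (hbound v hv) hρ

end

theorem div_csInf_le_of_forall_le_mul {D : Set ℝ} {a M : ℝ} (ha : 0 < a) (hM : 0 < M)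
    (hD : D.Nonempty) (h : ∀ d ∈ D, a ≤ d * M) : a / sInf D ≤ M := by
  have hle : a / M ≤ sInf D := le_csInf hD fun d hd => (div_le_iff₀ hM).2 (h d hd)
  rw [div_le_iff₀ ((div_pos ha hM).trans_le hle), mul_comm]
  rwa [div_le_iff₀ hM] at hle

theorem stmt4_general {E : Type*} [NormedAddCommGroup E] [NormedSpace ℝ E]
    (V : Finset E) (C : Set E) (hC : C = convexHull ℝ (V : Set E))
    (f : E → ℝ) (f' : E → E →L[ℝ] ℝ) (hdiff : ∀ x ∈ C, HasFDerivAt f (f' x) x)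
    (hconv : ConvexOn ℝ C f)
    (fstar : ℝ) (hfstar : IsLeast (f '' C) fstar)
    (Xstar : Set E) (hXstar : Xstar = {z ∈ C | f z = fstar}) :
    ∀ x ∈ C, x ∉ Xstar →
      sSup {t : ℝ | ∃ v ∈ C, t = f' x (x - v)} ≥
        (f x - fstar) / sInf {d : ℝ | ∃ z ∈ Xstar, d = radialDist C z x} := by
  subst hXstar
  intro x hx hxX
  obtain ⟨z₀, hz₀C, hz₀⟩ := hfstar.1
  have hgap : 0 < f x - fstar :=
    sub_pos.2 <| (hfstar.2 ⟨x, hx, rfl⟩).lt_of_ne fun h => hxX ⟨hx, h.symm⟩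
  have hCc : IsCompact C := hC ▸ V.finite_toSet.isCompact_convexHull (𝕜 := ℝ)
  have hbdd : BddAbove {t : ℝ | ∃ v ∈ C, t = f' x (x - v)} :=
    (hCc.bddAbove_image (f := fun v => f' x (x - v)) (by fun_prop)).mono <| by
      rintro _ ⟨v, hv, rfl⟩
      exact ⟨v, hv, rfl⟩
  set M := sSup {t : ℝ | ∃ v ∈ C, t = f' x (x - v)}
  have hbound : ∀ v ∈ C, f' x (x - v) ≤ M := fun v hv => le_csSup hbdd ⟨v, hv, rfl⟩
  have hM : 0 < M := by
    have := hconv.apply_sub_le_of_hasFDerivAt hx hz₀C (hdiff x hx)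
    rw [← neg_sub x z₀, map_neg, hz₀] at this
    linarith [hbound z₀ hz₀C]
  refine div_csInf_le_of_forall_le_mul hgap hM ⟨_, z₀, ⟨hz₀C, hz₀⟩, rfl⟩ ?_
  rintro _ ⟨z, ⟨hzC, rfl⟩, rfl⟩
  exact hconv.sub_le_radialDist_mul hx hzC (hdiff x hx) hM hbound

/-- Scaling lemma for the radial distance: for `x ∈ C \ X*`,
`max_{v ∈ C} ⟨∇f(x), x - v⟩ ≥ (f(x) - f*) / r(X*, x)`. -/
theorem stmt4 {E : Type*} [NormedAddCommGroup E] [NormedSpace ℝ E]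
    (V : Finset E) (C : Set E) (hC : C = convexHull ℝ (V : Set E)) (hCne : C.Nonempty)
    (f : E → ℝ) (f' : E → E →L[ℝ] ℝ) (hdiff : ∀ x ∈ C, HasFDerivAt f (f' x) x)
    (hconv : ConvexOn ℝ C f)
    (fstar : ℝ) (hfstar : IsLeast (f '' C) fstar)
    (Xstar : Set E) (hXstar : Xstar = {z ∈ C | f z = fstar}) :
    ∀ x ∈ C, x ∉ Xstar →
      sSup {t : ℝ | ∃ v ∈ C, t = f' x (x - v)} ≥
        (f x - fstar) / sInf {d : ℝ | ∃ z ∈ Xstar, d = radialDist C z x} :=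
  stmt4_general V C hC f f' hdiff hconv fstar hfstar Xstar hXstar
end

section
/- Let C ⊆ ℝⁿ be a polytope, f convex and differentiable on an open set containing C. If (C, f) satisfies the (μ, θ)-error bound relative to the radial distance r for some μ > 0 and θ ∈ [0, 1/2], then for all x ∈ C, max_{v ∈ C} ⟨∇f(x), x - v⟩ ≥ μ^θ (f(x) - f*)^{1-θ}. -/
/-!
If `z` is a minimizer and `z - x = ρ (v - x)` with `v ∈ C`, `ρ ≥ 0`, the gradient inequality gives
`f x - f* ≤ ⟨∇f(x), x - z⟩ = ρ ⟨∇f(x), x - v⟩ ≤ ρ G(x)`, where `G(x) = max_{v ∈ C} ⟨∇f(x), x - v⟩`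
is the Frank–Wolfe gap. Minimizing over `ρ` and `z` gives `f x - f* ≤ G(x) r(X*, x)`, and the error
bound turns this into `f x - f* ≤ G(x) ((f x - f*) / μ)^θ`, which rearranges to the claim.
-/

theorem Real.le_mul_sInf_of_forall_le_mul {a c : ℝ} {s : Set ℝ} (hs : s.Nonempty) (hc : 0 ≤ c)
    (h : ∀ ρ ∈ s, a ≤ c * ρ) : a ≤ c * sInf s := by
  rw [← smul_eq_mul, ← Real.sInf_smul_of_nonneg hc]
  exact le_csInf hs.smul_set <| by rintro _ ⟨ρ, hρ, rfl⟩; exact h ρ hρ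

theorem Real.rpow_mul_rpow_one_sub_le {g μ θ G : ℝ} (hg : 0 ≤ g) (hμ : 0 < μ) (hθ : θ < 1)
    (hG : 0 ≤ G) (h : g ≤ G * (g / μ) ^ θ) : μ ^ θ * g ^ (1 - θ) ≤ G := by
  rcases hg.eq_or_lt with rfl | hg
  · rwa [Real.zero_rpow (by linarith), mul_zero]
  have hpos : 0 < (g / μ) ^ θ := by positivity
  calc μ ^ θ * g ^ (1 - θ) = g / (g / μ) ^ θ := by
        rw [Real.div_rpow hg.le hμ.le, Real.rpow_sub hg, Real.rpow_one]
        field_simp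
    _ ≤ G := (div_le_iff₀ hpos).2 h

theorem ConvexOn.sub_le_apply_sub_of_hasFDerivAt {E : Type*} [NormedAddCommGroup E]
    [NormedSpace ℝ E] {C : Set E} {f : E → ℝ} {f' : E →L[ℝ] ℝ} {x z : E}
    (hf : ConvexOn ℝ C f) (hx : x ∈ C) (hz : z ∈ C) (hd : HasFDerivAt f f' x) :
    f x - f z ≤ f' (x - z) := by
  set L : ℝ →ᵃ[ℝ] E := AffineMap.lineMap x z
  have h0 : (0 : ℝ) ∈ L ⁻¹' C := by simpa [L] using hx
  have h1 : (1 : ℝ) ∈ L ⁻¹' C := by simpa [L] using hz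
  have hderiv : HasDerivAt (f ∘ L) (f' (z - x)) 0 :=
    (by simpa [L] using hd : HasFDerivAt f f' (L 0)).comp_hasDerivAt 0
      AffineMap.hasDerivAt_lineMap
  have hslope := (hf.comp_affineMap L).le_slope_of_hasDerivAt h0 h1 zero_lt_one hderiv
  simp only [slope, Function.comp_apply, L, AffineMap.lineMap_apply_zero,
    AffineMap.lineMap_apply_one, sub_zero, inv_one, one_smul, vsub_eq_sub] at hslope
  rw [map_sub] at hslope ⊢
  linarith

section FrankWolfeGap

variable {E : Type*} [NormedAddCommGroup E] [NormedSpace ℝ E] {C : Set E} (ℓ : E →L[ℝ] ℝ)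
  {x z : E}

/-- The Frank–Wolfe gap `max_{v ∈ C} ℓ (x - v)`. -/
noncomputable def fwGap (C : Set E) (x : E) : ℝ :=
  sSup {t : ℝ | ∃ v ∈ C, t = ℓ (x - v)}

theorem IsCompact.bddAbove_apply_sub (hC : IsCompact C) (x : E) :
    BddAbove {t : ℝ | ∃ v ∈ C, t = ℓ (x - v)} := by
  have := (hC.image (f := fun v => ℓ (x - v)) (by fun_prop)).bddAbove
  simpa only [Set.image, eq_comm] using this

variable {ℓ}

theorem apply_sub_le_fwGap (hbdd : BddAbove {t : ℝ | ∃ v ∈ C, t = ℓ (x - v)}) (hz : z ∈ C) :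
    ℓ (x - z) ≤ fwGap ℓ C x :=
  le_csSup hbdd ⟨z, hz, rfl⟩

theorem fwGap_nonneg (hbdd : BddAbove {t : ℝ | ∃ v ∈ C, t = ℓ (x - v)}) (hx : x ∈ C) :
    0 ≤ fwGap ℓ C x := by
  simpa using apply_sub_le_fwGap hbdd hx

theorem apply_sub_le_fwGap_mul_radialDist (hbdd : BddAbove {t : ℝ | ∃ v ∈ C, t = ℓ (x - v)})
    (hx : x ∈ C) (hz : z ∈ C) :
    ℓ (x - z) ≤ fwGap ℓ C x * radialDist C z x := by
  refine Real.le_mul_sInf_of_forall_le_mul ⟨1, zero_le_one, z, hz, (one_smul ℝ _).symm⟩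
    (fwGap_nonneg hbdd hx) ?_
  rintro ρ ⟨hρ, v, hv, hzv⟩
  have hxz : x - z = ρ • (x - v) := by rw [← neg_sub z x, hzv, ← smul_neg, neg_sub]
  rw [hxz, map_smul, smul_eq_mul, mul_comm]
  exact mul_le_mul_of_nonneg_right (apply_sub_le_fwGap hbdd hv) hρ

end FrankWolfeGap

theorem stmt5_general {E : Type*} [NormedAddCommGroup E] [NormedSpace ℝ E]
    (V : Finset E) (C : Set E) (hC : C = convexHull ℝ (V : Set E))
    (f : E → ℝ) (f' : E → E →L[ℝ] ℝ) (hdiff : ∀ x ∈ C, HasFDerivAt f (f' x) x)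
    (hconv : ConvexOn ℝ C f)
    (fstar : ℝ) (hfstar : IsLeast (f '' C) fstar)
    (Xstar : Set E) (hXstar : Xstar = {z ∈ C | f z = fstar})
    (μ θ : ℝ) (hμ : 0 < μ) (hθ : θ ∈ Set.Icc (0 : ℝ) (1 / 2))
    (heb : ∀ x ∈ C,
      ((f x - fstar) / μ) ^ θ ≥ sInf {d : ℝ | ∃ z ∈ Xstar, d = radialDist C z x}) :
    ∀ x ∈ C,
      sSup {t : ℝ | ∃ v ∈ C, t = f' x (x - v)} ≥ μ ^ θ * (f x - fstar) ^ (1 - θ) := by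
  intro x hx
  subst hXstar
  have hbdd : BddAbove {t : ℝ | ∃ v ∈ C, t = f' x (x - v)} :=
    (hC ▸ V.finite_toSet.isCompact_convexHull (𝕜 := ℝ)).bddAbove_apply_sub (f' x) x
  have hG := fwGap_nonneg hbdd hx
  obtain ⟨z₀, hz₀, hfz₀⟩ := hfstar.1
  have hdist : f x - fstar ≤
      fwGap (f' x) C x * sInf {d | ∃ z ∈ {z ∈ C | f z = fstar}, d = radialDist C z x} := by
    refine Real.le_mul_sInf_of_forall_le_mul ⟨_, z₀, ⟨hz₀, hfz₀⟩, rfl⟩ hG ?_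
    rintro _ ⟨z, ⟨hz, rfl⟩, rfl⟩
    exact (hconv.sub_le_apply_sub_of_hasFDerivAt hx hz (hdiff x hx)).trans
      (apply_sub_le_fwGap_mul_radialDist hbdd hx hz)
  exact Real.rpow_mul_rpow_one_sub_le (sub_nonneg.2 (hfstar.2 ⟨x, hx, rfl⟩)) hμ
    (by linarith [hθ.2]) hG (hdist.trans (mul_le_mul_of_nonneg_left (heb x hx) hG))

/-- If `(C, f)` satisfies the `(μ, θ)`-error bound relative to the radial distance,
then `max_{v ∈ C} ⟨∇f(x), x - v⟩ ≥ μ^θ (f(x) - f*)^{1-θ}` for all `x ∈ C`. -/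
theorem stmt5 {E : Type*} [NormedAddCommGroup E] [NormedSpace ℝ E]
    (V : Finset E) (C : Set E) (hC : C = convexHull ℝ (V : Set E)) (hCne : C.Nonempty)
    (f : E → ℝ) (f' : E → E →L[ℝ] ℝ) (hdiff : ∀ x ∈ C, HasFDerivAt f (f' x) x)
    (hconv : ConvexOn ℝ C f)
    (fstar : ℝ) (hfstar : IsLeast (f '' C) fstar)
    (Xstar : Set E) (hXstar : Xstar = {z ∈ C | f z = fstar})
    (μ θ : ℝ) (hμ : 0 < μ) (hθ : θ ∈ Set.Icc (0 : ℝ) (1 / 2))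
    (heb : ∀ x ∈ C,
      ((f x - fstar) / μ) ^ θ ≥ sInf {d : ℝ | ∃ z ∈ Xstar, d = radialDist C z x}) :
    ∀ x ∈ C,
      sSup {t : ℝ | ∃ v ∈ C, t = f' x (x - v)} ≥ μ ^ θ * (f x - fstar) ^ (1 - θ) :=
  stmt5_general V C hC f f' hdiff hconv fstar hfstar Xstar hXstar μ θ hμ hθ heb
end

section
/- Let ℝⁿ be endowed with a norm and C ⊆ ℝⁿ a nonempty polytope. Then for all x, y ∈ C, ‖y - x‖ ≥ v(y, x) · Φ(F(y), C), where v is the vertex distance, F(y) is the minimal face of C containing y, and Φ(F, C) is the inner facial distance. -/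
/-- Distance between two sets: `min_{a ∈ A, b ∈ B} ‖a - b‖`. -/
noncomputable def setDist' {E : Type*} [NormedAddCommGroup E] [NormedSpace ℝ E]
    (A B : Set E) : ℝ :=
  sInf {d : ℝ | ∃ a ∈ A, ∃ b ∈ B, d = ‖a - b‖}

/-- `min {γ ≥ 0 : y - x = γ (w - u) for some w ∈ C and u ∈ T}`. -/
noncomputable def stepDist {E : Type*} [NormedAddCommGroup E] [NormedSpace ℝ E]
    (C T : Set E) (y x : E) : ℝ :=
  sInf {γ : ℝ | 0 ≤ γ ∧ ∃ w ∈ C, ∃ u ∈ T, y - x = γ • (w - u)}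

/-- The collection `S(x)` of supports of convex-combination representations of `x`
by the vertices in `V`. -/
def supports {E : Type*} [NormedAddCommGroup E] [NormedSpace ℝ E]
    (V : Finset E) (x : E) : Set (Set E) :=
  {S | ∃ w : E → ℝ, (∀ v, 0 ≤ w v) ∧ (∑ v ∈ V, w v) = 1 ∧
    (∑ v ∈ V, w v • v) = x ∧ S = {v | v ∈ V ∧ 0 < w v}}

/-- The vertex distance. -/
noncomputable def vertexDist {E : Type*} [NormedAddCommGroup E] [NormedSpace ℝ E]
    (V : Finset E) (C : Set E) (y x : E) : ℝ :=
  sSup {g : ℝ | ∃ S ∈ supports V x, g = stepDist C (convexHull ℝ S) y x}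

/-- The minimal face of `C` containing `y` (faces of a polytope are its nonempty
extreme subsets). -/
def minFace {E : Type*} [NormedAddCommGroup E] [NormedSpace ℝ E]
    (C : Set E) (y : E) : Set E :=
  ⋂₀ {F : Set E | IsExtreme ℝ C F ∧ y ∈ F}

/-- The inner facial distance
`Φ(F, C) = min_{G ∈ faces(F), G ≠ C} dist(G, conv(vertices(C) \ G))`. -/
noncomputable def innerFacial {E : Type*} [NormedAddCommGroup E] [NormedSpace ℝ E]
    (F C : Set E) : ℝ :=
  sInf {d : ℝ | ∃ G : Set E, IsExtreme ℝ F G ∧ G.Nonempty ∧ G ≠ C ∧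
    d = setDist' G (convexHull ℝ (Set.extremePoints ℝ C \ G))}

/-!
Fix a support `S` of `x`, let `F` be the minimal face of `C` at `y`, and maximise `ρ` subject to
`ρ • (y - x) = w - u` with `w ∈ F` and `u ∈ conv S`, a problem over a compact set. At a maximiser no
point lies both in the minimal face `G` of `F` at `w` and in the minimal face of `conv S` at `u`:
moving `w` and `u` away from such a point would stretch `w - u`. Hence `u` is a convex combination
of vertices of `C` outside `G`, so `Φ(F, C) ≤ ‖w - u‖ = ρ ‖y - x‖`, while `y - x = ρ⁻¹ • (w - u)`
bounds the step `γ` by `ρ⁻¹`.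
-/

open Set
open scoped Pointwise

section MinimalFace

variable {E : Type*} [AddCommGroup E] [Module ℝ E]

/-- The points `z ∈ A` such that the segment from `z` through `p` extends beyond `p` inside `A`.
For convex `A ∋ p` this is the smallest extreme subset of `A` containing `p`. -/
def minimalFace (A : Set E) (p : E) : Set E :=
  {z | z ∈ A ∧ ∃ ε : ℝ, 0 < ε ∧ p + ε • (p - z) ∈ A}

lemma minimalFace_subset (A : Set E) (p : E) : minimalFace A p ⊆ A := fun _ hz => hz.1

lemma mem_minimalFace_self {A : Set E} {p : E} (hp : p ∈ A) : p ∈ minimalFace A p :=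
  ⟨hp, 1, one_pos, by simpa using hp⟩

lemma Convex.add_smul_sub_mem_of_le {A : Set E} (hA : Convex ℝ A) {p z : E} (hp : p ∈ A)
    {ε δ : ℝ} (hε : 0 < ε) (hq : p + ε • (p - z) ∈ A) (hδ : 0 ≤ δ) (hδε : δ ≤ ε) :
    p + δ • (p - z) ∈ A := by
  convert hA.add_smul_sub_mem hp hq ⟨div_nonneg hδ hε.le, (div_le_one hε).2 hδε⟩ using 2
  rw [add_sub_cancel_left, smul_smul, div_mul_cancel₀ _ hε.ne']

lemma sum_smul_mem_convexHull_of_ne_zero {ι : Type*} {s : Set E} {t : Finset ι} {μ : ι → ℝ}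
    {z : ι → E} (h0 : ∀ i ∈ t, 0 ≤ μ i) (h1 : ∑ i ∈ t, μ i = 1)
    (hz : ∀ i ∈ t, μ i ≠ 0 → z i ∈ s) : ∑ i ∈ t, μ i • z i ∈ convexHull ℝ s := by
  classical
  rw [← Finset.centerMass_eq_of_sum_1 _ _ h1, ← Finset.centerMass_filter_ne_zero]
  refine Finset.centerMass_mem_convexHull _ (fun i hi => h0 i (Finset.mem_filter.1 hi).1) ?_
    fun i hi => hz i (Finset.mem_filter.1 hi).1 (Finset.mem_filter.1 hi).2
  rw [Finset.sum_filter_ne_zero, h1]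
  exact one_pos

/-- Moving a convex combination away from a point of positive weight `μ j`, by up to `μ j` times
their difference, keeps all weights nonnegative. -/
lemma Convex.mem_minimalFace_sum {A : Set E} (hA : Convex ℝ A) {ι : Type*} {t : Finset ι}
    {μ : ι → ℝ} {z : ι → E} (h0 : ∀ i ∈ t, 0 ≤ μ i) (h1 : ∑ i ∈ t, μ i = 1)
    (hz : ∀ i ∈ t, z i ∈ A) {j : ι} (hj : j ∈ t) (hμj : 0 < μ j) :
    z j ∈ minimalFace A (∑ i ∈ t, μ i • z i) := by
  classical
  refine ⟨hz j hj, μ j, hμj, ?_⟩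
  have hsum : ∑ i ∈ t, μ i • z i + μ j • (∑ i ∈ t, μ i • z i - z j) =
      ∑ i ∈ t, ((1 + μ j) * μ i - if i = j then μ j else 0) • z i := by
    simp only [sub_smul, ite_smul, zero_smul, Finset.sum_sub_distrib, Finset.sum_ite_eq',
      if_pos hj, mul_smul, ← Finset.smul_sum]
    module
  rw [hsum]
  refine hA.sum_mem (fun i hi => ?_) ?_ hz
  · split_ifs with h
    · subst h; nlinarith
    · rw [sub_zero]
      exact mul_nonneg (by linarith) (h0 i hi)
  · rw [Finset.sum_sub_distrib, ← Finset.mul_sum, h1, Finset.sum_ite_eq', if_pos hj]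
    ring

lemma convex_minimalFace {A : Set E} (hA : Convex ℝ A) {p : E} (hp : p ∈ A) :
    Convex ℝ (minimalFace A p) := by
  rintro z₁ ⟨hz₁, ε₁, hε₁, hq₁⟩ z₂ ⟨hz₂, ε₂, hε₂, hq₂⟩ a b ha hb hab
  have hε : 0 < min ε₁ ε₂ := lt_min hε₁ hε₂
  have h₁ := hA.add_smul_sub_mem_of_le hp hε₁ hq₁ hε.le (min_le_left _ _)
  have h₂ := hA.add_smul_sub_mem_of_le hp hε₂ hq₂ hε.le (min_le_right _ _)
  refine ⟨hA hz₁ hz₂ ha hb hab, min ε₁ ε₂, hε, ?_⟩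
  convert hA h₁ h₂ ha hb hab using 1
  obtain rfl : b = 1 - a := by linarith
  module

lemma IsExtreme.minimalFace_subset {A F : Set E} (hF : IsExtreme ℝ A F) {p : E} (hp : p ∈ F) :
    minimalFace A p ⊆ F := by
  rintro z ⟨hz, ε, hε, hq⟩
  refine hF.2 hz hq hp ⟨ε / (1 + ε), 1 / (1 + ε), by positivity, by positivity, ?_, ?_⟩
  · field_simp
    ring
  · match_scalars
    · field_simp
      ring
    · field_simp

/-- If `z ∈ openSegment x₁ x₂` and `p + ε • (p - z) = q`, then `p` is a convex combination of
`q`, `x₁`, `x₂` with positive weight on `x₁`. -/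
lemma Convex.isExtreme_minimalFace {A : Set E} (hA : Convex ℝ A) (p : E) :
    IsExtreme ℝ A (minimalFace A p) := by
  refine ⟨minimalFace_subset A p, ?_⟩
  rintro x₁ hx₁ x₂ hx₂ _ ⟨-, ε, hε, hq⟩ ⟨a, b, ha, hb, hab, rfl⟩
  set μ : Fin 3 → ℝ := ![1 / (1 + ε), ε * a / (1 + ε), ε * b / (1 + ε)]
  set z : Fin 3 → E := ![p + ε • (p - (a • x₁ + b • x₂)), x₁, x₂]
  have hp : ∑ i, μ i • z i = p := by
    simp only [μ, z, Fin.sum_univ_three, Matrix.cons_val_zero, Matrix.cons_val_one,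
      Matrix.cons_val_two, Matrix.head_cons, Matrix.tail_cons]
    match_scalars <;> field_simp <;> ring
  have hμ0 : ∀ i ∈ Finset.univ, 0 ≤ μ i := by
    intro i _
    fin_cases i <;> dsimp [μ] <;> positivity
  have hμ1 : ∑ i, μ i = 1 := by
    simp only [μ, Fin.sum_univ_three, Matrix.cons_val_zero, Matrix.cons_val_one,
      Matrix.cons_val_two, Matrix.head_cons, Matrix.tail_cons]
    field_simp
    linear_combination ε * hab
  have hz : ∀ i ∈ Finset.univ, z i ∈ A := by
    simp [z, Fin.forall_fin_succ, hq, hx₁, hx₂]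
  have h := hA.mem_minimalFace_sum hμ0 hμ1 hz (Finset.mem_univ 1) (by dsimp [μ]; positivity)
  rwa [hp] at h

lemma minimalFace_convexHull {s : Set E} {p : E} (hp : p ∈ convexHull ℝ s) :
    minimalFace (convexHull ℝ s) p = convexHull ℝ (s ∩ minimalFace (convexHull ℝ s) p) := by
  have hA := convex_convexHull ℝ s
  refine Subset.antisymm (fun z hz => ?_)
    (convexHull_min inter_subset_right (convex_minimalFace hA hp))
  obtain ⟨ι, _, μ, x, hμ0, hμ1, hxs, rfl⟩ := mem_convexHull_iff_exists_fintype.1 hz.1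
  refine sum_smul_mem_convexHull_of_ne_zero (fun i _ => hμ0 i) hμ1 fun i _ hμi => ⟨hxs i, ?_⟩
  refine (hA.isExtreme_minimalFace p).minimalFace_subset hz ?_
  exact hA.mem_minimalFace_sum (fun i _ => hμ0 i) hμ1 (fun i _ => subset_convexHull ℝ s (hxs i))
    (Finset.mem_univ i) ((hμ0 i).lt_of_ne' hμi)

lemma exists_one_add_smul_sub_mem_sub {F U : Set E} (hF : Convex ℝ F) (hU : Convex ℝ U)
    {w u v : E} (hw : w ∈ F) (hu : u ∈ U) (hvF : v ∈ minimalFace F w)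
    (hvU : v ∈ minimalFace U u) : ∃ ε : ℝ, 0 < ε ∧ (1 + ε) • (w - u) ∈ F - U := by
  obtain ⟨-, ε₁, hε₁, hq₁⟩ := hvF
  obtain ⟨-, ε₂, hε₂, hq₂⟩ := hvU
  have hε : 0 < min ε₁ ε₂ := lt_min hε₁ hε₂
  refine ⟨min ε₁ ε₂, hε, _, hF.add_smul_sub_mem_of_le hw hε₁ hq₁ hε.le (min_le_left _ _),
    _, hU.add_smul_sub_mem_of_le hu hε₂ hq₂ hε.le (min_le_right _ _), by module⟩

lemma disjoint_minimalFace_of_isGreatest {F U : Set E} (hF : Convex ℝ F) (hU : Convex ℝ U)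
    {d w u : E} {ρ : ℝ} (hρ : IsGreatest {ρ : ℝ | ρ • d ∈ F - U} ρ) (hρpos : 0 < ρ)
    (hw : w ∈ F) (hu : u ∈ U) (hwu : w - u = ρ • d) :
    Disjoint (minimalFace F w) (minimalFace U u) := by
  refine disjoint_left.2 fun v hvF hvU => ?_
  obtain ⟨ε, hε, hmem⟩ := exists_one_add_smul_sub_mem_sub hF hU hw hu hvF hvU
  have hle : (1 + ε) * ρ ≤ ρ := hρ.2 (by rwa [mem_ofPred_eq, mul_smul, ← hwu])
  nlinarith

end MinimalFace

section Normed

variable {E : Type*} [NormedAddCommGroup E] [NormedSpace ℝ E]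

lemma minFace_eq_minimalFace {C : Set E} (hC : Convex ℝ C) {y : E} (hy : y ∈ C) :
    minFace C y = minimalFace C y := by
  refine (sInter_subset_of_mem ?_).antisymm fun _ hz _ ⟨hF, hyF⟩ => hF.minimalFace_subset hyF hz
  exact ⟨hC.isExtreme_minimalFace y, mem_minimalFace_self hy⟩

lemma isCompact_minimalFace_convexHull {s : Set E} (hs : s.Finite) {p : E}
    (hp : p ∈ convexHull ℝ s) : IsCompact (minimalFace (convexHull ℝ s) p) := by
  rw [minimalFace_convexHull hp]
  exact (hs.subset inter_subset_left).isCompact_convexHull (𝕜 := ℝ)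

lemma exists_isGreatest_smul_mem {K : Set E} (hK : IsCompact K) {d : E} (hd : d ≠ 0)
    (hdK : d ∈ K) : ∃ ρ : ℝ, IsGreatest {ρ : ℝ | ρ • d ∈ K} ρ :=
  ((isClosedEmbedding_smul_left (𝕜 := ℝ) hd).isCompact_preimage hK).exists_isGreatest
    ⟨1, by simpa using hdK⟩

lemma setDist'_nonneg (A B : Set E) : 0 ≤ setDist' A B :=
  Real.sInf_nonneg (by rintro _ ⟨a, -, b, -, rfl⟩; exact norm_nonneg _)

lemma setDist'_le_norm_sub {A B : Set E} {a b : E} (ha : a ∈ A) (hb : b ∈ B) :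
    setDist' A B ≤ ‖a - b‖ :=
  csInf_le ⟨0, by rintro _ ⟨a, -, b, -, rfl⟩; exact norm_nonneg _⟩ ⟨a, ha, b, hb, rfl⟩

lemma innerFacial_nonneg (F C : Set E) : 0 ≤ innerFacial F C :=
  Real.sInf_nonneg (by rintro _ ⟨G, -, -, -, rfl⟩; exact setDist'_nonneg _ _)

lemma innerFacial_le_norm_sub {F C G : Set E} (hG : IsExtreme ℝ F G) (hGC : G ≠ C) {a b : E}
    (ha : a ∈ G) (hb : b ∈ convexHull ℝ (extremePoints ℝ C \ G)) : innerFacial F C ≤ ‖a - b‖ := by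
  refine (csInf_le ?_ ?_).trans (setDist'_le_norm_sub ha hb)
  · exact ⟨0, by rintro _ ⟨G, -, -, -, rfl⟩; exact setDist'_nonneg _ _⟩
  · exact ⟨G, hG, ⟨a, ha⟩, hGC, rfl⟩

lemma stepDist_le {C T : Set E} {y x w u : E} {γ : ℝ} (hγ : 0 ≤ γ) (hw : w ∈ C) (hu : u ∈ T)
    (h : y - x = γ • (w - u)) : stepDist C T y x ≤ γ :=
  csInf_le ⟨0, fun _ h => h.1⟩ ⟨hγ, w, hw, u, hu, h⟩

lemma subset_of_mem_supports {V : Finset E} {x : E} {S : Set E} (hS : S ∈ supports V x) :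
    S ⊆ V := by
  obtain ⟨w, -, -, -, rfl⟩ := hS
  exact fun v hv => hv.1

lemma mem_convexHull_of_mem_supports {V : Finset E} {x : E} {S : Set E}
    (hS : S ∈ supports V x) : x ∈ convexHull ℝ S := by
  obtain ⟨w, hw0, hw1, rfl, rfl⟩ := hS
  exact sum_smul_mem_convexHull_of_ne_zero (fun v _ => hw0 v) hw1
    fun v hv hwv => ⟨hv, (hw0 v).lt_of_ne' hwv⟩

lemma stepDist_mul_innerFacial_le {V : Finset E} {C : Set E} (hC : C = convexHull ℝ (V : Set E))
    (hV : (V : Set E) ⊆ extremePoints ℝ C) {S : Set E} (hSV : S ⊆ V) {x y : E}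
    (hx : x ∈ convexHull ℝ S) (hy : y ∈ C) :
    stepDist C (convexHull ℝ S) y x * innerFacial (minFace C y) C ≤ ‖y - x‖ := by
  have hΦ := innerFacial_nonneg (minFace C y) C
  rcases eq_or_ne y x with rfl | hyx
  · calc _ ≤ 0 * innerFacial (minFace C y) C :=
          mul_le_mul_of_nonneg_right (stepDist_le le_rfl hy hx (by simp)) hΦ
      _ ≤ ‖y - y‖ := by simp
  have hCconv : Convex ℝ C := hC ▸ convex_convexHull ℝ _
  rw [minFace_eq_minimalFace hCconv hy] at hΦ ⊢
  set F := minimalFace C y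
  have hFconv : Convex ℝ F := convex_minimalFace hCconv hy
  have hFU : IsCompact (F - convexHull ℝ S) := by
    rw [sub_eq_add_neg]
    refine IsCompact.add ?_ ((V.finite_toSet.subset hSV).isCompact_convexHull (𝕜 := ℝ)).neg
    subst hC
    exact isCompact_minimalFace_convexHull V.finite_toSet hy
  have hyx_mem : y - x ∈ F - convexHull ℝ S := sub_mem_sub (mem_minimalFace_self hy) hx
  obtain ⟨ρ, hρ⟩ := exists_isGreatest_smul_mem hFU (sub_ne_zero.2 hyx) hyx_mem
  have hρpos : 0 < ρ := one_pos.trans_le (hρ.2 (by simpa using hyx_mem))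
  obtain ⟨w, hw, u, hu, hwu : w - u = ρ • (y - x)⟩ := hρ.1
  set G := minimalFace F w
  have hdisj : Disjoint G (minimalFace (convexHull ℝ S) u) :=
    disjoint_minimalFace_of_isGreatest hFconv (convex_convexHull ℝ S) hρ hρpos hw hu hwu
  have huG : u ∈ convexHull ℝ (extremePoints ℝ C \ G) := by
    have hu' := mem_minimalFace_self hu
    rw [minimalFace_convexHull hu] at hu'
    refine convexHull_mono ?_ hu'
    rintro v ⟨hvS, hvU⟩
    exact ⟨hV (hSV hvS), disjoint_right.1 hdisj hvU⟩
  have hGC : G ≠ C := fun h => disjoint_right.1 hdisj (mem_minimalFace_self hu)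
    (by rw [h, hC]; exact convexHull_mono hSV hu)
  have hstep : stepDist C (convexHull ℝ S) y x ≤ ρ⁻¹ := by
    refine stepDist_le (inv_nonneg.2 hρpos.le) (minimalFace_subset _ _ hw) hu ?_
    rw [hwu, smul_smul, inv_mul_cancel₀ hρpos.ne', one_smul]
  have hfacial : innerFacial F C ≤ ‖w - u‖ :=
    innerFacial_le_norm_sub (hFconv.isExtreme_minimalFace w) hGC (mem_minimalFace_self hw) huG
  calc _ ≤ ρ⁻¹ * ‖w - u‖ := mul_le_mul hstep hfacial hΦ (inv_nonneg.2 hρpos.le)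
    _ = ‖y - x‖ := by
      rw [hwu, norm_smul, Real.norm_of_nonneg hρpos.le, inv_mul_cancel_left₀ hρpos.ne']

end Normed

theorem stmt12_general {E : Type*} [NormedAddCommGroup E] [NormedSpace ℝ E]
    (V : Finset E) (C : Set E) (hC : C = convexHull ℝ (V : Set E))
    (hV : (V : Set E) = Set.extremePoints ℝ C) :
    ∀ x ∈ C, ∀ y ∈ C,
      ‖y - x‖ ≥ vertexDist V C y x * innerFacial (minFace C y) C := by
  intro x _ y hy
  rcases (innerFacial_nonneg (minFace C y) C).eq_or_lt with hΦ | hΦ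
  · rw [← hΦ, mul_zero]
    exact norm_nonneg _
  rw [ge_iff_le, ← le_div_iff₀ hΦ]
  refine Real.sSup_le ?_ (by positivity)
  rintro _ ⟨S, hS, rfl⟩
  rw [le_div_iff₀ hΦ]
  exact stepDist_mul_innerFacial_le hC hV.subset (subset_of_mem_supports hS)
    (mem_convexHull_of_mem_supports hS) hy

/-- For all `x, y` in a polytope `C`: `‖y - x‖ ≥ v(y, x) · Φ(F(y), C)`. -/
theorem stmt12 {E : Type*} [NormedAddCommGroup E] [NormedSpace ℝ E]
    (V : Finset E) (C : Set E) (hC : C = convexHull ℝ (V : Set E)) (hCne : C.Nonempty)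
    (hV : (V : Set E) = Set.extremePoints ℝ C) :
    ∀ x ∈ C, ∀ y ∈ C,
      ‖y - x‖ ≥ vertexDist V C y x * innerFacial (minFace C y) C :=
  stmt12_general V C hC hV
end
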